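/- (Khintchine's inequality) For each p with 1 ≤ p < ∞ there exist constants A_p, B_p > 0 such that for all a = (a_k) ∈ l^2, A_p ‖a‖_2 ≤ ‖Σ_{k=1}^∞ a_k r_k‖_{L^p[0,1]} ≤ B_p ‖a‖_2. -/

import Mathlib

/-!
On `[0, 1]` the Rademacher functions behave like independent random signs, except `rademacher 0`,
which is `1` on `(0, 1)`: a product `∏_{k ∈ S} r_k` is constant on the dyadic intervals of length
`2^{-max S}`, and its integral vanishes as soon as `S` contains some `k ≠ 0`. Hence the `r_k` are
orthonormal and `∫ exp (∑ b_k r_k) = e^{b_0} ∏_{k ≥ 1} cosh b_k ≤ e^{‖b‖₂ + ‖b‖₂² / 2}`.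

Upper bound: `|y|^q ≤ σ^q (e^{q y / σ} + e^{-q y / σ})` turns the exponential moment bound into
`‖∑_{k<n} a_k r_k‖_q ≤ (2 e^{q + q²/2})^{1/q} ‖a‖₂`, which passes to the a.e. limit by Fatou.

Lower bound: the partial sums converge to `x` in `L²`, so `‖x‖₂ ≥ ‖a‖₂`; Hölder's inequality
`‖x‖₂⁴ ≤ ‖x‖₁ ‖x‖₃³` together with the upper bound for `q = 3` then bounds `‖x‖₁ ≤ ‖x‖_p`
from below.
-/

open MeasureTheory

/-- The Rademacher functions `r_{k+1}(t) = sign (sin (2^k π t))` (0-indexed). -/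
noncomputable def rademacher (k : ℕ) (t : ℝ) : ℝ :=
  Real.sign (Real.sin (2 ^ k * Real.pi * t))

open Filter Finset Real
open scoped ENNReal

lemma sign_sin_pi_mul_eq_neg_one_zpow {θ : ℝ} {q : ℤ} (h₁ : q < θ) (h₂ : θ < q + 1) :
    Real.sign (sin (π * θ)) = (-1) ^ q := by
  have hpos : 0 < sin ((θ - q) * π) :=
    sin_pos_of_pos_of_lt_pi (by nlinarith [pi_pos]) (by nlinarith [pi_pos])
  rw [show π * θ = (θ - q) * π + q * π by ring, sin_add_int_mul_pi]
  rcases Int.even_or_odd q with hq | hq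
  · rw [hq.neg_one_zpow, one_mul, Real.sign_of_pos hpos]
  · rw [hq.neg_one_zpow, neg_one_mul, Real.sign_neg, Real.sign_of_pos hpos]

lemma rademacher_eq_neg_one_zpow {k : ℕ} {t : ℝ} {q : ℤ} (h₁ : q < 2 ^ k * t)
    (h₂ : 2 ^ k * t < q + 1) : rademacher k t = (-1) ^ q := by
  rw [rademacher, mul_comm _ π, mul_assoc]
  exact sign_sin_pi_mul_eq_neg_one_zpow h₁ h₂

lemma rademacher_zero_of_mem_Ioo {t : ℝ} (ht : t ∈ Set.Ioo 0 1) : rademacher 0 t = 1 := by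
  simpa using
    rademacher_eq_neg_one_zpow (k := 0) (q := 0) (by simpa using ht.1) (by simpa using ht.2)

lemma rademacher_of_mem_dyadic_Ioo {k m j : ℕ} (hkm : k ≤ m) {t : ℝ}
    (ht : t ∈ Set.Ioo ((j : ℝ) / 2 ^ m) ((j + 1) / 2 ^ m)) :
    rademacher k t = (-1) ^ (j / 2 ^ (m - k)) := by
  have hb : (0 : ℝ) < 2 ^ (m - k) := by positivity
  have hpow : (2 : ℝ) ^ m = 2 ^ k * 2 ^ (m - k) := by rw [← pow_add, Nat.add_sub_cancel' hkm]
  have hlo : ((j / 2 ^ (m - k) : ℕ) : ℝ) * 2 ^ (m - k) ≤ j := by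
    exact_mod_cast Nat.div_mul_le_self j _
  have hhi : (j : ℝ) + 1 ≤ ((j / 2 ^ (m - k) : ℕ) + 1 : ℝ) * 2 ^ (m - k) := by
    have := Nat.lt_div_mul_add (a := j) (Nat.two_pow_pos (m - k))
    rw [← add_one_mul] at this
    exact_mod_cast this
  generalize j / 2 ^ (m - k) = q at hlo hhi
  obtain ⟨h₁, h₂⟩ := ht
  rw [div_lt_iff₀ (by positivity), hpow] at h₁
  rw [lt_div_iff₀ (by positivity), hpow] at h₂
  rw [← zpow_natCast]
  apply rademacher_eq_neg_one_zpow <;> rw [Int.cast_natCast] <;>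
    exact lt_of_mul_lt_mul_right (by linarith) hb.le

lemma ae_rademacher_eq_one_or_neg_one :
    ∀ᵐ t, ∀ k, rademacher k t = 1 ∨ rademacher k t = -1 := by
  refine ae_all_iff.mpr fun k => ?_
  have hnull : volume (Set.range fun n : ℤ => (n : ℝ) / 2 ^ k) = 0 :=
    (Set.countable_range _).measure_zero _
  refine measure_mono_null (fun t ht => ?_) hnull
  by_contra hdyadic
  refine ht ?_
  have hfloor : (⌊2 ^ k * t⌋ : ℝ) < 2 ^ k * t := by
    refine (Int.floor_le _).lt_of_ne fun h => hdyadic ⟨⌊2 ^ k * t⌋, ?_⟩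
    field_simp
    linarith
  rw [Set.mem_ofPred_eq, rademacher_eq_neg_one_zpow hfloor (Int.lt_floor_add_one _)]
  rcases Int.even_or_odd ⌊2 ^ k * t⌋ with h | h
  · exact Or.inl h.neg_one_zpow
  · exact Or.inr h.neg_one_zpow

lemma sum_range_two_mul_neg_one_pow_mul {R : Type*} [CommRing R] (G : ℕ → R) (n : ℕ) :
    ∑ j ∈ range (2 * n), (-1) ^ j * G (j / 2) = 0 := by
  induction n with
  | zero => simp
  | succ n ih =>
    rw [mul_add_one, sum_range_succ, sum_range_succ, ih, show 2 * n / 2 = n by omega,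
      show (2 * n + 1) / 2 = n by omega, pow_succ, (even_two_mul n).neg_one_pow]
    ring

lemma intervalIntegral_eq_sum_of_eqOn_Ioo {F : ℝ → ℝ} {N : ℕ} (hN : 0 < N) (c : ℕ → ℝ)
    (hF : ∀ j < N, Set.EqOn F (fun _ => c j) (Set.Ioo (j / N) ((j + 1) / N))) :
    ∫ t in (0 : ℝ)..1, F t = (∑ j ∈ range N, c j) / N := by
  have hle : ∀ j : ℕ, (j / N : ℝ) ≤ (j + 1) / N := fun j => by gcongr; linarith
  have hpiece : ∀ j < N, ∫ t in (j / N : ℝ)..((j + 1 : ℕ) / N : ℝ), F t = c j / N := by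
    intro j hj
    push_cast
    rw [intervalIntegral.integral_of_le (hle j), integral_Ioc_eq_integral_Ioo,
      setIntegral_congr_fun measurableSet_Ioo (hF j hj), setIntegral_const,
      measureReal_def, Real.volume_Ioo, ENNReal.toReal_ofReal (sub_nonneg.mpr (hle j)),
      smul_eq_mul]
    field_simp
    ring
  have hint : ∀ j < N, IntervalIntegrable F volume (j / N : ℝ) ((j + 1 : ℕ) / N : ℝ) := by
    intro j hj
    push_cast
    rw [intervalIntegrable_iff_integrableOn_Ioo_of_le (hle j)]
    exact (integrableOn_congr_fun (hF j hj) measurableSet_Ioo).mpr (integrableOn_const (by simp))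
  have hsum := intervalIntegral.sum_integral_adjacent_intervals hint
  rw [Nat.cast_zero, zero_div, div_self (Nat.cast_ne_zero.mpr hN.ne' : (N : ℝ) ≠ 0)] at hsum
  rw [← hsum, sum_congr rfl fun j hj => hpiece j (mem_range.mp hj), sum_div]

lemma intervalIntegral_prod_rademacher {S : Finset ℕ} (hS : ∃ k ∈ S, k ≠ 0) :
    ∫ t in (0 : ℝ)..1, ∏ k ∈ S, rademacher k t = 0 := by
  obtain ⟨k₀, hk₀, hk₀_ne⟩ := hS
  set m := S.max' ⟨k₀, hk₀⟩
  have hmS : m ∈ S := S.max'_mem _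
  have hm : 1 ≤ m := (Nat.one_le_iff_ne_zero.mpr hk₀_ne).trans (S.le_max' k₀ hk₀)
  have hconst : ∀ j : ℕ, j < 2 ^ m → Set.EqOn (fun t => ∏ k ∈ S, rademacher k t)
      (fun _ => ∏ k ∈ S, (-1 : ℝ) ^ (j / 2 ^ (m - k)))
      (Set.Ioo ((j : ℝ) / ((2 ^ m : ℕ) : ℝ)) ((j + 1) / ((2 ^ m : ℕ) : ℝ))) := by
    intro j _ t ht
    push_cast at ht
    exact prod_congr rfl fun k hk => rademacher_of_mem_dyadic_Ioo (S.le_max' k hk) ht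
  rw [intervalIntegral_eq_sum_of_eqOn_Ioo (by positivity) _ hconst]
  -- the top factor `(-1) ^ j` flips between `j = 2i` and `j = 2i + 1`; the others see only `j / 2`
  have hsplit : ∀ j, ∏ k ∈ S, (-1 : ℝ) ^ (j / 2 ^ (m - k)) =
      (-1) ^ j * ∏ k ∈ S.erase m, (-1 : ℝ) ^ (j / 2 / 2 ^ (m - 1 - k)) := by
    intro j
    rw [← mul_prod_erase S _ hmS, Nat.sub_self, pow_zero, Nat.div_one]
    congr 1
    refine prod_congr rfl fun k hk => ?_
    have hk : k < m := lt_of_le_of_ne (S.le_max' k (mem_of_mem_erase hk)) (ne_of_mem_erase hk)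
    rw [Nat.div_div_eq_div_mul, ← pow_succ', show m - 1 - k + 1 = m - k by omega]
  rw [sum_congr rfl fun j _ => hsplit j, show 2 ^ m = 2 * 2 ^ (m - 1) by
    rw [← pow_succ', Nat.sub_add_cancel hm], sum_range_two_mul_neg_one_pow_mul
      (fun i => ∏ k ∈ S.erase m, (-1 : ℝ) ^ (i / 2 ^ (m - 1 - k))), zero_div]

@[fun_prop]
lemma measurable_rademacher (k : ℕ) : Measurable (rademacher k) := by
  have hsign : Measurable Real.sign :=
    Measurable.ite measurableSet_Iio measurable_const
      (Measurable.ite measurableSet_Ioi measurable_const measurable_const)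
  exact hsign.comp (by fun_prop)

lemma abs_rademacher_le_one (k : ℕ) (t : ℝ) : |rademacher k t| ≤ 1 := by
  rcases Real.sign_apply_eq (sin (2 ^ k * π * t)) with h | h | h <;> simp [rademacher, h]

local notation "μ₀" => volume.restrict (Set.Icc (0 : ℝ) 1)

instance : IsProbabilityMeasure μ₀ := ⟨by simp⟩

lemma integral_prod_rademacher {S : Finset ℕ} (hS : ∃ k ∈ S, k ≠ 0) :
    ∫ t, ∏ k ∈ S, rademacher k t ∂μ₀ = 0 := by
  rw [integral_Icc_eq_integral_Ioc, ← intervalIntegral.integral_of_le zero_le_one,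
    intervalIntegral_prod_rademacher hS]

lemma ae_restrict_rademacher_eq_one_or_neg_one :
    ∀ᵐ t ∂μ₀, ∀ k, rademacher k t = 1 ∨ rademacher k t = -1 :=
  ae_restrict_of_ae ae_rademacher_eq_one_or_neg_one

lemma ae_restrict_rademacher_zero : ∀ᵐ t ∂μ₀, rademacher 0 t = 1 := by
  rw [← Measure.restrict_congr_set Ioo_ae_eq_Icc]
  exact (ae_restrict_mem measurableSet_Ioo).mono fun t => rademacher_zero_of_mem_Ioo

lemma integral_rademacher_mul_rademacher (j k : ℕ) :
    ∫ t, rademacher j t * rademacher k t ∂μ₀ = if j = k then 1 else 0 := by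
  split_ifs with hjk
  · subst hjk
    have hsq : ∀ᵐ t ∂μ₀, rademacher j t * rademacher j t = 1 :=
      ae_restrict_rademacher_eq_one_or_neg_one.mono fun t ht => by
        rcases ht j with h | h <;> simp [h]
    simp [integral_congr_ae hsq]
  · have hS : ∃ i ∈ ({j, k} : Finset ℕ), i ≠ 0 := by
      by_cases hj : j = 0
      · exact ⟨k, by simp, by omega⟩
      · exact ⟨j, by simp, hj⟩
    simpa [prod_pair hjk] using integral_prod_rademacher hS

lemma integral_sq_sum_rademacher (T : Finset ℕ) (a : ℕ → ℝ) :
    ∫ t, (∑ k ∈ T, a k * rademacher k t) ^ 2 ∂μ₀ = ∑ k ∈ T, a k ^ 2 := by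
  have hint : ∀ j k, Integrable (fun t => a j * a k * (rademacher j t * rademacher k t)) μ₀ :=
    fun j k => (Integrable.of_bound (by fun_prop) 1 (.of_forall fun t => by
      rw [norm_mul, Real.norm_eq_abs, Real.norm_eq_abs]
      exact mul_le_one₀ (abs_rademacher_le_one j t) (abs_nonneg _) (abs_rademacher_le_one k t)))
      |>.const_mul _
  simp_rw [sq, sum_mul_sum, mul_mul_mul_comm]
  rw [integral_finsetSum _ fun j _ => integrable_finsetSum _ fun k _ => hint j k]
  refine sum_congr rfl fun j hj => ?_
  rw [integral_finsetSum _ fun k _ => hint j k]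
  simp_rw [integral_const_mul, integral_rademacher_mul_rademacher, mul_ite, mul_one, mul_zero]
  rw [sum_ite_eq T j, if_pos hj]

lemma abs_sum_rademacher_le (T : Finset ℕ) (a : ℕ → ℝ) (t : ℝ) :
    |∑ k ∈ T, a k * rademacher k t| ≤ ∑ k ∈ T, |a k| :=
  (abs_sum_le_sum_abs _ _).trans <| sum_le_sum fun k _ => by
    rw [abs_mul]; exact mul_le_of_le_one_right (abs_nonneg _) (abs_rademacher_le_one k t)

lemma memLp_sum_rademacher (T : Finset ℕ) (a : ℕ → ℝ) (p : ℝ≥0∞) :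
    MemLp (fun t => ∑ k ∈ T, a k * rademacher k t) p μ₀ :=
  .of_bound (by fun_prop) _ (.of_forall fun t => abs_sum_rademacher_le T a t)

lemma eLpNorm_two_sum_rademacher (T : Finset ℕ) (a : ℕ → ℝ) :
    eLpNorm (fun t => ∑ k ∈ T, a k * rademacher k t) 2 μ₀ =
      ENNReal.ofReal √(∑ k ∈ T, a k ^ 2) := by
  rw [(memLp_sum_rademacher T a 2).eLpNorm_eq_integral_rpow_norm two_ne_zero ENNReal.ofNat_ne_top]
  simp [sqrt_eq_rpow, integral_sq_sum_rademacher]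

lemma integral_prod_add_mul_rademacher {S : Finset ℕ} (h0 : 0 ∉ S) (c d : ℕ → ℝ) :
    ∫ t, ∏ k ∈ S, (d k * rademacher k t + c k) ∂μ₀ = ∏ k ∈ S, c k := by
  have hterm : ∀ T ∈ S.powerset, ∫ t, (∏ k ∈ T, d k * rademacher k t) * ∏ k ∈ S \ T, c k ∂μ₀ =
      if T = ∅ then ∏ k ∈ S, c k else 0 := by
    intro T hT
    simp_rw [prod_mul_distrib, mul_right_comm _ (∏ k ∈ T, rademacher k _), integral_const_mul]
    split_ifs with hT₀
    · simp [hT₀]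
    · obtain ⟨k, hk⟩ := nonempty_iff_ne_empty.mpr hT₀
      rw [integral_prod_rademacher ⟨k, hk, fun h => h0 (h ▸ mem_powerset.mp hT hk)⟩, mul_zero]
  simp_rw [prod_add]
  rw [integral_finsetSum _ fun T _ => ?_, sum_congr rfl hterm, sum_ite_eq' _ _ _,
    if_pos (empty_mem_powerset S)]
  exact (Integrable.of_bound (by fun_prop) (∏ k ∈ T, |d k|) (.of_forall fun t => by
    rw [Real.norm_eq_abs, abs_prod]
    exact prod_le_prod (fun _ _ => abs_nonneg _) fun k _ => by
      rw [abs_mul]; exact mul_le_of_le_one_right (abs_nonneg _) (abs_rademacher_le_one k t)))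
    |>.mul_const _

lemma exp_mul_eq_sinh_mul_add_cosh {b r : ℝ} (hr : r = 1 ∨ r = -1) :
    exp (b * r) = sinh b * r + cosh b := by
  rcases hr with rfl | rfl
  · simp [cosh_add_sinh, add_comm]
  · simp [← cosh_sub_sinh, sub_eq_neg_add]

lemma integral_exp_sum_rademacher_le (n : ℕ) (b : ℕ → ℝ) :
    ∫ t, exp (∑ k ∈ range n, b k * rademacher k t) ∂μ₀ ≤
      exp (√(∑ k ∈ range n, b k ^ 2) + (∑ k ∈ range n, b k ^ 2) / 2) := by
  rcases Nat.eq_zero_or_pos n with rfl | hn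
  · simp
  have hb₀ : |b 0| ≤ √(∑ k ∈ range n, b k ^ 2) :=
    abs_le_sqrt (single_le_sum (fun k _ => sq_nonneg (b k)) (mem_range.mpr hn))
  have hsplit : ∀ f : ℕ → ℝ, ∑ k ∈ range n, f k = f 0 + ∑ k ∈ Ico 1 n, f k := fun f => by
    rw [range_eq_Ico, sum_eq_sum_Ico_succ_bot hn]
  have hae : (fun t => exp (∑ k ∈ range n, b k * rademacher k t)) =ᵐ[μ₀]
      fun t => exp (b 0) * ∏ k ∈ Ico 1 n, (sinh (b k) * rademacher k t + cosh (b k)) := by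
    filter_upwards [ae_restrict_rademacher_zero, ae_restrict_rademacher_eq_one_or_neg_one]
      with t h₀ hpm
    rw [hsplit, h₀, mul_one, exp_add, exp_sum]
    simp_rw [exp_mul_eq_sinh_mul_add_cosh (hpm _)]
  rw [integral_congr_ae hae, integral_const_mul, integral_prod_add_mul_rademacher (by simp)]
  calc exp (b 0) * ∏ k ∈ Ico 1 n, cosh (b k)
      ≤ exp (b 0) * ∏ k ∈ Ico 1 n, exp (b k ^ 2 / 2) := by
        gcongr with k
        exact cosh_le_exp_half_sq _
    _ = exp (b 0 + (∑ k ∈ Ico 1 n, b k ^ 2) / 2) := by rw [← exp_sum, ← exp_add, sum_div]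
    _ ≤ _ := by
        rw [exp_le_exp]
        have := hsplit (b · ^ 2)
        linarith [le_abs_self (b 0), sq_nonneg (b 0)]

lemma abs_rpow_le_mul_exp_add_exp (y : ℝ) {q σ : ℝ} (hq : 0 ≤ q) (hσ : 0 < σ) :
    |y| ^ q ≤ σ ^ q * (exp (q / σ * y) + exp (-(q / σ * y))) := by
  have hy : |y| / σ ≤ exp (|y| / σ) := by linarith [add_one_le_exp (|y| / σ)]
  calc |y| ^ q = σ ^ q * (|y| / σ) ^ q := by
        rw [div_rpow (abs_nonneg y) hσ.le, mul_div_cancel₀ _ (rpow_pos_of_pos hσ q).ne']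
    _ ≤ σ ^ q * exp (q / σ * |y|) := by
        gcongr
        calc (|y| / σ) ^ q ≤ exp (|y| / σ) ^ q := by gcongr
          _ = exp (q / σ * |y|) := by rw [← exp_mul]; ring_nf
    _ ≤ σ ^ q * (exp (q / σ * y) + exp (-(q / σ * y))) := by
        gcongr
        rcases abs_cases y with ⟨h, _⟩ | ⟨h, _⟩ <;> rw [h]
        · exact le_add_of_nonneg_right (exp_pos _).le
        · rw [mul_neg]; exact le_add_of_nonneg_left (exp_pos _).le

lemma integrable_exp_sum_rademacher (T : Finset ℕ) (b : ℕ → ℝ) :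
    Integrable (fun t => exp (∑ k ∈ T, b k * rademacher k t)) μ₀ :=
  .of_bound (by fun_prop) (exp (∑ k ∈ T, |b k|)) (.of_forall fun t => by
    rw [Real.norm_eq_abs, abs_exp, exp_le_exp]
    exact (le_abs_self _).trans (abs_sum_rademacher_le T b t))

lemma integral_abs_sum_rademacher_rpow_le {q : ℝ} (hq : 0 ≤ q) (a : ℕ → ℝ) (n : ℕ)
    (hs : 0 < ∑ k ∈ range n, a k ^ 2) :
    ∫ t, |∑ k ∈ range n, a k * rademacher k t| ^ q ∂μ₀ ≤
      2 * exp (q + q ^ 2 / 2) * √(∑ k ∈ range n, a k ^ 2) ^ q := by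
  set σ := √(∑ k ∈ range n, a k ^ 2)
  have hσ : 0 < σ := sqrt_pos.mpr hs
  have hσsq : σ ^ 2 = ∑ k ∈ range n, a k ^ 2 := sq_sqrt hs.le
  have hmgf : ∀ c, c ^ 2 = (q / σ) ^ 2 →
      ∫ t, exp (∑ k ∈ range n, c * a k * rademacher k t) ∂μ₀ ≤ exp (q + q ^ 2 / 2) := by
    intro c hc
    have hsq : ∑ k ∈ range n, (c * a k) ^ 2 = q ^ 2 := by
      simp_rw [mul_pow, ← mul_sum, hc, div_pow, hσsq]
      field_simp
    refine (integral_exp_sum_rademacher_le n (fun k => c * a k)).trans_eq ?_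
    rw [hsq, sqrt_sq hq]
  have hbound : ∀ t, |∑ k ∈ range n, a k * rademacher k t| ^ q ≤ σ ^ q *
      (exp (∑ k ∈ range n, q / σ * a k * rademacher k t) +
        exp (∑ k ∈ range n, -(q / σ) * a k * rademacher k t)) := fun t => by
    simpa only [mul_sum, neg_mul, ← sum_neg_distrib, mul_assoc]
      using abs_rpow_le_mul_exp_add_exp (∑ k ∈ range n, a k * rademacher k t) hq hσ
  have hint : ∀ c : ℝ, Integrable (fun t => exp (∑ k ∈ range n, c * a k * rademacher k t)) μ₀ :=
    fun c => integrable_exp_sum_rademacher _ (fun k => c * a k)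
  calc _ ≤ ∫ t, σ ^ q * (exp (∑ k ∈ range n, q / σ * a k * rademacher k t) +
        exp (∑ k ∈ range n, -(q / σ) * a k * rademacher k t)) ∂μ₀ :=
        integral_mono_of_nonneg (.of_forall fun t => by positivity)
          (((hint _).add (hint _)).const_mul _) (.of_forall hbound)
    _ ≤ σ ^ q * (exp (q + q ^ 2 / 2) + exp (q + q ^ 2 / 2)) := by
        rw [integral_const_mul, integral_add (hint _) (hint _)]
        gcongr
        · exact hmgf _ rfl
        · exact hmgf _ (neg_sq _)
    _ = 2 * exp (q + q ^ 2 / 2) * σ ^ q := by ring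

noncomputable def khintchineConst (q : ℝ) : ℝ := (2 * exp (q + q ^ 2 / 2)) ^ q⁻¹

lemma khintchineConst_pos (q : ℝ) : 0 < khintchineConst q := by
  unfold khintchineConst; positivity

lemma eLpNorm_sum_rademacher_le {q : ℝ} (hq : 0 < q) (a : ℕ → ℝ) (n : ℕ) :
    eLpNorm (fun t => ∑ k ∈ range n, a k * rademacher k t) (ENNReal.ofReal q) μ₀ ≤
      ENNReal.ofReal (khintchineConst q * √(∑ k ∈ range n, a k ^ 2)) := by
  rcases (sum_nonneg fun k _ => sq_nonneg (a k)).eq_or_lt with hs | hs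
  · have hzero := (sum_eq_zero_iff_of_nonneg fun k _ => sq_nonneg (a k)).mp hs.symm
    have hfun : (fun t => ∑ k ∈ range n, a k * rademacher k t) = 0 := funext fun t =>
      sum_eq_zero fun k hk => by rw [(pow_eq_zero_iff two_ne_zero).mp (hzero k hk), zero_mul]
    simp [hfun]
  rw [(memLp_sum_rademacher _ a _).eLpNorm_eq_integral_rpow_norm (by simpa using hq)
    ENNReal.ofReal_ne_top, ENNReal.toReal_ofReal hq.le]
  refine ENNReal.ofReal_le_ofReal ?_
  simp only [Real.norm_eq_abs]
  calc _ ≤ (2 * exp (q + q ^ 2 / 2) * √(∑ k ∈ range n, a k ^ 2) ^ q) ^ q⁻¹ := by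
        gcongr
        exact integral_abs_sum_rademacher_rpow_le hq.le a n hs
    _ = _ := by
        rw [mul_rpow (by positivity) (by positivity), ← rpow_mul (sqrt_nonneg _),
          mul_inv_cancel₀ hq.ne', rpow_one, khintchineConst]

lemma eLpNorm_two_pow_four_le {α E : Type*} [MeasurableSpace α] {μ : Measure α}
    [NormedAddCommGroup E] {f : α → E} (hf : AEStronglyMeasurable f μ) :
    eLpNorm f 2 μ ^ 4 ≤ eLpNorm f 1 μ * eLpNorm f 3 μ ^ 3 := by
  have h2 : eLpNorm f 2 μ ^ 2 = ∫⁻ a, ‖f a‖ₑ ^ 2 ∂μ := by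
    simpa using eLpNorm_nnreal_pow_eq_lintegral (f := f) (μ := μ) (p := 2) two_ne_zero
  have h3 : eLpNorm f 3 μ ^ 3 = ∫⁻ a, ‖f a‖ₑ ^ 3 ∂μ := by
    simpa using eLpNorm_nnreal_pow_eq_lintegral (f := f) (μ := μ) (p := 3) three_ne_zero
  -- Cauchy–Schwarz for `‖f‖² = ‖f‖^{1/2} · ‖f‖^{3/2}`
  have hcs : ∫⁻ a, ‖f a‖ₑ ^ 2 ∂μ ≤
      (∫⁻ a, ‖f a‖ₑ ∂μ) ^ (2⁻¹ : ℝ) * (∫⁻ a, ‖f a‖ₑ ^ 3 ∂μ) ^ (2⁻¹ : ℝ) := by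
    refine le_of_eq_of_le (lintegral_congr fun a => ?_)
      (ENNReal.lintegral_mul_norm_pow_le hf.enorm (hf.enorm.pow_const 3) (by norm_num) (by norm_num)
        (by norm_num))
    rw [← ENNReal.rpow_natCast, ← ENNReal.rpow_natCast, ← ENNReal.rpow_mul,
      ← ENNReal.rpow_add_of_nonneg _ _ (by norm_num) (by norm_num)]
    norm_num
  have hsq := ENNReal.rpow_le_rpow hcs (by norm_num : (0 : ℝ) ≤ 2)
  rw [ENNReal.mul_rpow_of_nonneg _ _ (by norm_num), ← ENNReal.rpow_mul, ← ENNReal.rpow_mul] at hsq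
  norm_num at hsq
  rwa [← eLpNorm_one_eq_lintegral_enorm, ← h2, ← h3, ← pow_mul] at hsq

lemma ofReal_div_le_eLpNorm_one {α E : Type*} [MeasurableSpace α] {μ : Measure α}
    [NormedAddCommGroup E] {f : α → E} (hf : AEStronglyMeasurable f μ) {σ C : ℝ} (hC : 0 < C)
    (h₂ : ENNReal.ofReal σ ≤ eLpNorm f 2 μ) (h₃ : eLpNorm f 3 μ ≤ ENNReal.ofReal (C * σ)) :
    ENNReal.ofReal (σ / C ^ 3) ≤ eLpNorm f 1 μ := by
  rcases le_or_gt σ 0 with hσ | hσ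
  · rw [ENNReal.ofReal_of_nonpos (div_nonpos_of_nonpos_of_nonneg hσ (by positivity))]
    exact zero_le
  have hK : ENNReal.ofReal (C * σ) ^ 3 ≠ 0 := by positivity
  have hK' : ENNReal.ofReal (C * σ) ^ 3 ≠ ⊤ := by finiteness
  rw [← ENNReal.mul_le_mul_iff_left hK hK']
  calc ENNReal.ofReal (σ / C ^ 3) * ENNReal.ofReal (C * σ) ^ 3 = ENNReal.ofReal σ ^ 4 := by
        rw [← ENNReal.ofReal_pow (by positivity), ← ENNReal.ofReal_mul (by positivity),
          ← ENNReal.ofReal_pow hσ.le]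
        congr 1
        field_simp
    _ ≤ eLpNorm f 2 μ ^ 4 := by gcongr
    _ ≤ eLpNorm f 1 μ * eLpNorm f 3 μ ^ 3 := eLpNorm_two_pow_four_le hf
    _ ≤ eLpNorm f 1 μ * ENNReal.ofReal (C * σ) ^ 3 := by gcongr

section HasSum

variable {a : ℕ → ℝ} {x : ℝ → ℝ}
  (hx : ∀ᵐ t ∂μ₀, HasSum (fun k => a k * rademacher k t) (x t))
include hx

lemma aestronglyMeasurable_of_hasSum_rademacher : AEStronglyMeasurable x μ₀ :=
  aestronglyMeasurable_of_tendsto_ae atTop (fun n => by fun_prop)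
    (hx.mono fun _ ht => ht.tendsto_sum_nat)

variable (ha : Summable fun k => a k ^ 2)
include ha

lemma eLpNorm_le_of_hasSum_rademacher {q : ℝ} (hq : 0 < q) :
    eLpNorm x (ENNReal.ofReal q) μ₀ ≤ ENNReal.ofReal (khintchineConst q * √(∑' k, a k ^ 2)) := by
  refine Lp.eLpNorm_le_of_ae_tendsto (.of_forall fun n => ?_)
    (fun n => by fun_prop) (hx.mono fun _ ht => ht.tendsto_sum_nat)
  refine (eLpNorm_sum_rademacher_le hq a n).trans ?_
  gcongr
  · exact (khintchineConst_pos q).le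
  · exact ha.sum_le_tsum _ fun k _ => sq_nonneg (a k)

lemma eLpNorm_two_sub_sum_le_of_hasSum_rademacher (n : ℕ) :
    eLpNorm (fun t => x t - ∑ k ∈ range n, a k * rademacher k t) 2 μ₀ ≤
      ENNReal.ofReal √(∑' k, a k ^ 2 - ∑ k ∈ range n, a k ^ 2) := by
  refine Lp.eLpNorm_le_of_ae_tendsto (f := fun m t => ∑ k ∈ Ico n m, a k * rademacher k t)
    ((eventually_ge_atTop n).mono fun m hm => ?_) (fun m => by fun_prop)
    (hx.mono fun t ht => ?_)
  · rw [eLpNorm_two_sum_rademacher]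
    gcongr
    rw [sum_Ico_eq_sub _ hm, sub_le_sub_iff_right]
    exact ha.sum_le_tsum _ fun k _ => sq_nonneg (a k)
  · exact (ht.tendsto_sum_nat.sub_const _).congr'
      ((eventually_ge_atTop n).mono fun m hm => (sum_Ico_eq_sub _ hm).symm)

lemma ofReal_sqrt_tsum_le_eLpNorm_two_of_hasSum_rademacher :
    ENNReal.ofReal √(∑' k, a k ^ 2) ≤ eLpNorm x 2 μ₀ := by
  have hlim : Tendsto (fun n => ∑ k ∈ range n, a k ^ 2) atTop (nhds (∑' k, a k ^ 2)) :=
    ha.hasSum.tendsto_sum_nat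
  have hcont : Continuous fun s : ℝ => ENNReal.ofReal √s :=
    ENNReal.continuous_ofReal.comp continuous_sqrt
  refine le_of_tendsto_of_tendsto' ((hcont.tendsto _).comp hlim) (g := fun n => eLpNorm x 2 μ₀ +
    ENNReal.ofReal √(∑' k, a k ^ 2 - ∑ k ∈ range n, a k ^ 2)) ?_ fun n => ?_
  · have := (tendsto_const_nhds (x := eLpNorm x 2 μ₀)).add
      ((hcont.tendsto _).comp (hlim.const_sub (∑' k, a k ^ 2)))
    rwa [sub_self, sqrt_zero, ENNReal.ofReal_zero, add_zero] at this
  · rw [Function.comp_apply, ← eLpNorm_two_sum_rademacher]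
    calc _ = eLpNorm (fun t => x t - (x t - ∑ k ∈ range n, a k * rademacher k t)) 2 μ₀ := by
          simp
      _ ≤ eLpNorm x 2 μ₀ + eLpNorm (fun t => x t - ∑ k ∈ range n, a k * rademacher k t) 2 μ₀ :=
          eLpNorm_sub_le (aestronglyMeasurable_of_hasSum_rademacher hx)
            ((aestronglyMeasurable_of_hasSum_rademacher hx).sub (by fun_prop)) one_le_two
      _ ≤ _ := by gcongr; exact eLpNorm_two_sub_sum_le_of_hasSum_rademacher hx ha n

end HasSum

/-- Khintchine's inequality: for `1 ≤ p < ∞` there are constants `A_p, B_p > 0` with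
`A_p ‖a‖₂ ≤ ‖∑ a_k r_k‖_{L^p[0,1]} ≤ B_p ‖a‖₂` for all `a ∈ ℓ²`. -/
theorem khintchine (p : ℝ) (hp : 1 ≤ p) :
    ∃ A B : ℝ, 0 < A ∧ 0 < B ∧
      ∀ (a : ℕ → ℝ), Summable (fun k => (a k) ^ 2) →
        ∀ x : ℝ → ℝ,
          (∀ᵐ t ∂(volume.restrict (Set.Icc (0:ℝ) 1)),
            HasSum (fun k => a k * rademacher k t) (x t)) →
          ENNReal.ofReal (A * Real.sqrt (∑' k, (a k) ^ 2)) ≤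
              eLpNorm x (ENNReal.ofReal p) (volume.restrict (Set.Icc (0:ℝ) 1)) ∧
            eLpNorm x (ENNReal.ofReal p) (volume.restrict (Set.Icc (0:ℝ) 1)) ≤
              ENNReal.ofReal (B * Real.sqrt (∑' k, (a k) ^ 2)) := by
  have hC₃ := khintchineConst_pos 3
  refine ⟨(khintchineConst 3 ^ 3)⁻¹, khintchineConst p, by positivity, khintchineConst_pos p,
    fun a ha x hx => ⟨?_, eLpNorm_le_of_hasSum_rademacher hx ha (by linarith)⟩⟩
  have hxm := aestronglyMeasurable_of_hasSum_rademacher hx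
  have h₃ := eLpNorm_le_of_hasSum_rademacher hx ha three_pos
  rw [ENNReal.ofReal_ofNat] at h₃
  calc ENNReal.ofReal ((khintchineConst 3 ^ 3)⁻¹ * √(∑' k, a k ^ 2))
      = ENNReal.ofReal (√(∑' k, a k ^ 2) / khintchineConst 3 ^ 3) := by rw [inv_mul_eq_div]
    _ ≤ eLpNorm x 1 μ₀ := ofReal_div_le_eLpNorm_one hxm hC₃
        (ofReal_sqrt_tsum_le_eLpNorm_two_of_hasSum_rademacher hx ha) h₃
    _ ≤ eLpNorm x (ENNReal.ofReal p) μ₀ :=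
        eLpNorm_le_eLpNorm_of_exponent_le (by simpa using hp) hxm
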